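/- arXiv:2102.10697 — 2 statements merged into one kernel-verified Lean document; each statement's English description precedes it below -/
import Mathlib

section
/- Let a be a non-empty answer span and t a non-empty trial span with shared-token count s_ta satisfying 0 < s_ta ≤ |a| (and s_ta ≤ |t|). Let x be any non-empty span whose length satisfies |x| ≥ |a| · (|t| + |a| − s_ta) / s_ta, and let s_xa be its shared-token count with a, satisfying 0 ≤ s_xa ≤ |a| (and s_xa ≤ |x|). Then F1(x, a) ≤ F1(t, a), i.e. 2·s_xa / (|x| + |a|) ≤ 2·s_ta / (|t| + |a|). (Theorem 1 of the paper: no span at least as long as the length limit |a|·(|t|+|a|−s_ta)/s_ta can achieve a strictly larger F1 score against a than the current trial span t.) -/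
/-- Theorem 1: given span lengths `a, t ≥ 1`, shared-token count
`0 < s_ta ≤ a` (and `s_ta ≤ t`), any span of length
`x ≥ a * (t + a - s_ta) / s_ta` with shared-token count
`0 ≤ s_xa ≤ a` (and `s_xa ≤ x`) cannot achieve a strictly larger F1:
`2 * s_xa / (x + a) ≤ 2 * s_ta / (t + a)`. -/
theorem f1_length_limit (a t s_ta x s_xa : ℝ)
    (ha : 1 ≤ a) (ht : 1 ≤ t)
    (hsta_pos : 0 < s_ta) (hsta_le_a : s_ta ≤ a) (hsta_le_t : s_ta ≤ t)
    (hx : a * (t + a - s_ta) / s_ta ≤ x)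
    (hsxa_nonneg : 0 ≤ s_xa) (hsxa_le_a : s_xa ≤ a) (hsxa_le_x : s_xa ≤ x) :
    2 * s_xa / (x + a) ≤ 2 * s_ta / (t + a) := by
  have hx' : a * (t + a - s_ta) ≤ x * s_ta := by
    have := (div_le_iff₀ hsta_pos).mp hx
    linarith
  have hxa : 0 < x + a := by nlinarith
  have hta : 0 < t + a := by linarith
  rw [div_le_div_iff₀ hxa hta]
  nlinarith
end

section
/- Model spans as non-empty finite sets of tokens over a type α with decidable equality, and define the shared-token count of spans b and c as the cardinality of their intersection, s_bc = |b ∩ c|, and the F1 score as F1(b, c) = 2·|b ∩ c| / (|b| + |c|) (a real number). Let a and t be non-empty finite sets with |t ∩ a| > 0. Then for every finite set x with (|x| : ℝ) ≥ |a| · (|t| + |a| − |t ∩ a|) / |t ∩ a|, one has F1(x, a) ≤ F1(t, a). (Instantiation of Theorem 1 of the paper with shared-token counts realized as intersection cardinalities, where the bounds 0 ≤ s_xa ≤ |a| and 0 < s_ta ≤ |a| hold automatically.) -/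
/-- Token-level F1 score of two spans modeled as finite sets:
`F1 b c = 2 * |b ∩ c| / (|b| + |c|)` as a real number. -/
noncomputable def F1 {α : Type*} [DecidableEq α] (b c : Finset α) : ℝ :=
  2 * (b ∩ c).card / ((b.card : ℝ) + c.card)

/-- Instantiation of Theorem 1 with shared-token counts realized as
intersection cardinalities: if `a` and `t` are nonempty with
`|t ∩ a| > 0`, then every finite set `x` with
`(|x| : ℝ) ≥ |a| * (|t| + |a| - |t ∩ a|) / |t ∩ a|`
satisfies `F1 x a ≤ F1 t a`. -/
theorem f1_length_limit_finset {α : Type*} [DecidableEq α]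
    (a t : Finset α) (ha : a.Nonempty) (ht : t.Nonempty)
    (hta : 0 < (t ∩ a).card) (x : Finset α)
    (hx : (a.card : ℝ) * ((t.card : ℝ) + a.card - (t ∩ a).card) / (t ∩ a).card
            ≤ x.card) :
    F1 x a ≤ F1 t a := by
  have hA : (0:ℝ) < a.card := by exact_mod_cast ha.card_pos
  have hS : (0:ℝ) < (t ∩ a).card := by exact_mod_cast hta
  have hT : (0:ℝ) < t.card := by exact_mod_cast ht.card_pos
  have hXA : (0:ℝ) < (x.card : ℝ) + a.card := by positivity
  have hTA : (0:ℝ) < (t.card : ℝ) + a.card := by positivity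
  have hxa : ((x ∩ a).card : ℝ) ≤ a.card := by
    exact_mod_cast Finset.card_le_card (Finset.inter_subset_right)
  -- key: |x| + |a| ≥ |a| * (|t|+|a|) / s
  have hkey : (a.card : ℝ) * ((t.card : ℝ) + a.card) / (t ∩ a).card
      ≤ (x.card : ℝ) + a.card := by
    have : (a.card : ℝ) * ((t.card : ℝ) + a.card) / (t ∩ a).card
        = (a.card : ℝ) * ((t.card : ℝ) + a.card - (t ∩ a).card) / (t ∩ a).card
          + a.card := by
      field_simp; ring
    rw [this]
    linarith
  have step1 : F1 x a ≤ 2 * a.card / ((x.card : ℝ) + a.card) := by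
    unfold F1
    gcongr
  have step2 : 2 * (a.card : ℝ) / ((x.card : ℝ) + a.card) ≤ F1 t a := by
    unfold F1
    rw [div_le_div_iff₀ hXA hTA]
    have h2 := (div_le_iff₀ hS).mp hkey
    nlinarith
  linarith
end
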